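/- Let S be a finite meet-closed set and x_i ∈ S generating a double-chain set with chains A_i, B_i, and suppose exactly one element x_p ∈ C_S(x_i) attaches to both chains. Let x_a, x_b be the top elements of A_i, B_i and η(x_k) the number of elements of C_S(x_i) attached to x_k. Then μ_S(x_i,x_i)=1; μ_S(x_j,x_i)=−1 for x_j ∈ C_S(x_i); μ_S(x_j,x_i)=η(x_j)−1 for x_j ∈ {x_a, x_b}; μ_S(x_j,x_i)=η(x_j) for x_j ∈ A_i ∪ B_i with x_j ∉ {x_a, x_b}; and μ_S(x_j,x_i)=0 otherwise. -/

import Mathlib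

open scoped Classical

/-- `y` is covered by `x` in the induced order on `T`. -/
def coversIn {α : Type*} [SemilatticeInf α] (T : Set α) (y x : α) : Prop :=
  y ∈ T ∧ x ∈ T ∧ y < x ∧ ∀ z ∈ T, ¬(y < z ∧ z < x)

/-- The set of elements of `S` covered by `x` in `S`. -/
def CSet {α : Type*} [SemilatticeInf α] (S : Set α) (x : α) : Set α :=
  {y | coversIn S y x}

/-- The meet closure of `T`: all finite meets of elements of `T`. -/
def meetcl {α : Type*} [SemilatticeInf α] (T : Set α) : Set α :=
  {y | ∃ F : Finset α, ∃ h : F.Nonempty, ↑F ⊆ T ∧ y = F.inf' h id}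

/-!
Write `C = C_S(x_i)` and `M = meetcl C`. Every element of `S` below `x_i` lies below an element
of `C`, and the elements of the meet-closed set `M` above it are exactly those above their meet.
Hence the recursion defining `μ_S(·, x_i)` is solved by the function that vanishes off `M` and is
a weight `g` on `M`, as soon as `∑_{z ∈ M, v ≤ z} g z = -1` for every `v ∈ M`.

For the weight of the theorem this sum is computed by double counting the pairs `w ⋖ c` with
`v ≤ w ∈ A ∪ B` and `c ∈ C`: each `c > v` covers exactly one such `w`, except `x_p`, which covers
two of them (`x_q ∈ A` and `x_r ∈ B`) exactly when `v ≤ x_q` and `v ≤ x_r`. Since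
`x_a ⊓ x_p = x_q` and `x_b ⊓ x_p = x_r`, this happens exactly when `v ≤ x_a` and `v ≤ x_b`.
-/

open Finset

section Covers

variable {α : Type*} [SemilatticeInf α]

theorem meetcl_eq_infClosure (T : Set α) : meetcl T = infClosure T := by
  ext y
  exact ⟨fun ⟨F, hF, hFT, h⟩ => ⟨F, hF, hFT, h.symm⟩, fun ⟨F, hF, hFT, h⟩ => ⟨F, hF, hFT, h.symm⟩⟩

theorem exists_ge_of_mem_meetcl {T : Set α} {m : α} (hm : m ∈ meetcl T) : ∃ c ∈ T, m ≤ c := by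
  obtain ⟨F, ⟨c, hc⟩, hFT, rfl⟩ := hm
  exact ⟨c, hFT hc, F.inf'_le id hc⟩

theorem subset_meetcl (T : Set α) : T ⊆ meetcl T :=
  meetcl_eq_infClosure T ▸ subset_infClosure

theorem infClosed_meetcl (T : Set α) : InfClosed (meetcl T) :=
  meetcl_eq_infClosure T ▸ infClosed_infClosure

theorem meetcl_min {S T : Set α} (hS : InfClosed S) (hT : T ⊆ S) : meetcl T ⊆ S :=
  meetcl_eq_infClosure T ▸ infClosure_min hT hS

theorem not_lt_of_mem_meetcl {T : Set α} (hT : IsAntichain (· ≤ ·) T) {c m : α} (hc : c ∈ T)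
    (hm : m ∈ meetcl T) : ¬c < m := by
  obtain ⟨c', hc', hmc'⟩ := exists_ge_of_mem_meetcl hm
  exact fun hcm => hT hc hc' (hcm.trans_le hmc').ne (hcm.le.trans hmc')

theorem CSet_subset (T : Set α) (x : α) : CSet T x ⊆ T := fun _ hy => hy.1

theorem isAntichain_CSet (T : Set α) (x : α) : IsAntichain (· ≤ ·) (CSet T x) :=
  fun _ hc c' hc' hne hle => hc.2.2.2 c' hc'.1 ⟨hle.lt_of_ne hne, hc'.2.2.1⟩

theorem lt_of_mem_meetcl_CSet {T : Set α} {x m : α} (hm : m ∈ meetcl (CSet T x)) : m < x := by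
  obtain ⟨c, hc, hmc⟩ := exists_ge_of_mem_meetcl hm
  exact hmc.trans_lt hc.2.2.1

theorem inf_eq_of_coversIn {T : Set α} (hT : InfClosed T) {s p y : α} (hsp : coversIn T s p)
    (hy : y ∈ T) (hsy : s ≤ y) (hpy : ¬p ≤ y) : y ⊓ p = s := by
  by_contra hne
  have hlt : y ⊓ p < p := inf_le_right.lt_of_ne fun h => hpy (h ▸ inf_le_left)
  exact hsp.2.2.2 _ (hT hy hsp.2.1) ⟨(le_inf hsy hsp.2.2.1.le).lt_of_ne (Ne.symm hne), hlt⟩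

theorem IsChain.eq_of_coversIn {T X : Set α} (hX : IsChain (· ≤ ·) X) {w₁ w₂ c : α}
    (h₁ : w₁ ∈ X) (h₂ : w₂ ∈ X) (hc₁ : coversIn T w₁ c) (hc₂ : coversIn T w₂ c) : w₁ = w₂ := by
  by_contra hne
  rcases hX h₁ h₂ hne with h | h
  · exact hc₁.2.2.2 w₂ hc₂.1 ⟨h.lt_of_ne hne, hc₂.2.2.1⟩
  · exact hc₂.2.2.2 w₁ hc₁.1 ⟨h.lt_of_ne (Ne.symm hne), hc₁.2.2.1⟩

theorem exists_coversIn_of_lt {T : Finset α} {v u : α} (hv : v ∈ T) (hu : u ∈ T) (hvu : v < u) :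
    ∃ w ∈ T, v ≤ w ∧ coversIn T w u := by
  obtain ⟨w, hvw, hw⟩ :=
    (T.filter (fun w => v ≤ w ∧ w < u)).exists_le_maximal (mem_filter.2 ⟨hv, le_rfl, hvu⟩)
  obtain ⟨hwT, -, hwu⟩ := mem_filter.1 hw.prop
  refine ⟨w, hwT, hvw, hwT, hu, hwu, fun z hz ⟨hwz, hzu⟩ => ?_⟩
  exact hw.not_gt (mem_filter.2 ⟨hz, hvw.trans hwz.le, hzu⟩) hwz

theorem InfClosed.exists_filter_le_eq {M : Finset α} (hM : InfClosed (M : Set α)) {v m : α}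
    (hm : m ∈ M) (hvm : v ≤ m) : ∃ w ∈ M, M.filter (v ≤ ·) = M.filter (w ≤ ·) := by
  have hU : (M.filter (v ≤ ·)).Nonempty := ⟨m, mem_filter.2 ⟨hm, hvm⟩⟩
  refine ⟨_, hM.finsetInf'_mem hU fun z hz => (mem_filter.1 hz).1, ?_⟩
  ext z
  simp only [mem_filter, and_congr_right_iff]
  refine fun hz => ⟨fun hvz => inf'_le id (mem_filter.2 ⟨hz, hvz⟩), fun hwz => ?_⟩
  exact (le_inf' hU id fun y hy => (mem_filter.1 hy).2).trans hwz

end Covers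

section Moebius

theorem eq_of_moebius_recursion {α : Type*} [PartialOrder α] {S : Finset α} {x : α}
    {f g : α → ℤ} (hx : f x = g x)
    (hf : ∀ y ∈ S, y < x → f y = -∑ z ∈ S.filter (fun z => y < z ∧ z ≤ x), f z)
    (hg : ∀ y ∈ S, y < x → g y = -∑ z ∈ S.filter (fun z => y < z ∧ z ≤ x), g z) :
    ∀ y ∈ S, y ≤ x → f y = g y := by
  refine fun y hy => (S.finite_toSet.wellFoundedOn (r := (· > ·))).induction
    (P := fun y => y ≤ x → f y = g y) hy fun y hy ih hyx => ?_
  rcases hyx.eq_or_lt with rfl | hyx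
  · exact hx
  rw [hf y hy hyx, hg y hy hyx]
  refine congrArg _ (sum_congr rfl fun z hz => ?_)
  obtain ⟨hzS, hyz, hzx⟩ := mem_filter.1 hz
  exact ih z hzS hyz hzx

theorem sum_filter_lt_of_infClosed {α : Type*} [SemilatticeInf α] {M : Finset α} {g : α → ℤ}
    (hM : InfClosed (M : Set α)) (hg : ∀ v ∈ M, ∑ z ∈ M.filter (v ≤ ·), g z = -1) {v m : α}
    (hm : m ∈ M) (hvm : v ≤ m) : ∑ z ∈ M.filter (v < ·), g z = -1 - if v ∈ M then g v else 0 := by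
  by_cases hvM : v ∈ M
  · have hins : M.filter (v ≤ ·) = insert v (M.filter (v < ·)) := by
      ext z
      rcases eq_or_ne z v with rfl | hz
      · simp [hvM]
      · simp [hz, le_iff_eq_or_lt, hz.symm]
    have h := hg v hvM
    rw [hins, sum_insert (by simp)] at h
    rw [if_pos hvM]
    linarith
  · obtain ⟨w, hw, hvw⟩ := hM.exists_filter_le_eq hm hvm
    have hlt : M.filter (v < ·) = M.filter (v ≤ ·) :=
      filter_congr fun z hz => ⟨le_of_lt, fun h => h.lt_of_ne (by rintro rfl; exact hvM hz)⟩
    rw [if_neg hvM, hlt, hvw, hg w hw, sub_zero]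

theorem moebius_eq_of_infClosed_cover {α : Type*} [SemilatticeInf α] {S M : Finset α} {x : α}
    {mu g : α → ℤ} (hxS : x ∈ S) (hMS : M ⊆ S) (hMx : ∀ m ∈ M, m < x)
    (hM : InfClosed (M : Set α)) (hcover : ∀ v ∈ S, v < x → ∃ m ∈ M, v ≤ m)
    (hg : ∀ v ∈ M, ∑ z ∈ M.filter (v ≤ ·), g z = -1) (hmu1 : mu x = 1)
    (hmu : ∀ y ∈ S, y < x → mu y = -∑ z ∈ S.filter (fun z => y < z ∧ z ≤ x), mu z) :
    ∀ v ∈ S, v < x → mu v = if v ∈ M then g v else 0 := by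
  set f : α → ℤ := fun v => if v = x then 1 else if v ∈ M then g v else 0
  have hf : ∀ z, f z = (if z = x then 1 else 0) + if z ∈ M then g z else 0 := by
    intro z
    rcases eq_or_ne z x with rfl | hzx
    · simp [f, show z ∉ M from fun h => lt_irrefl z (hMx z h)]
    · simp [f, hzx]
  have hsum : ∀ v < x,
      ∑ z ∈ S.filter (fun z => v < z ∧ z ≤ x), f z = 1 + ∑ z ∈ M.filter (v < ·), g z := by
    intro v hvx
    have hM' : (S.filter (fun z => v < z ∧ z ≤ x)).filter (· ∈ M) = M.filter (v < ·) := by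
      ext z
      simp only [mem_filter]
      exact ⟨fun h => ⟨h.2, h.1.2.1⟩, fun h => ⟨⟨hMS h.1, h.2, (hMx z h.1).le⟩, h.1⟩⟩
    simp only [hf, sum_add_distrib, sum_ite_eq', ← sum_filter, hM']
    simp [hxS, hvx]
  have hmu_f : ∀ v ∈ S, v < x → mu v = f v := by
    refine fun v hv hvx => eq_of_moebius_recursion ?_ hmu (fun y hy hyx => ?_) v hv hvx.le
    · simp [f, hmu1]
    · obtain ⟨m, hm, hym⟩ := hcover y hy hyx
      rw [hsum y hyx, sum_filter_lt_of_infClosed hM hg hm hym]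
      simp [f, hyx.ne]
  intro v hv hvx
  simp [hmu_f v hv hvx, f, hvx.ne]

end Moebius

section DoubleChain

variable {α : Type*} [SemilatticeInf α]

/-- `C` stands for `C_S(x_i)` and `M` for its meet closure; `xq ∈ A` and `xr ∈ B` are the
elements of the two chains covered by `xp`, and `xa`, `xb` are the tops of the chains. -/
structure IsDoubleChain (C M : Finset α) (A B : Set α) (xp xq xr xa xb : α) : Prop where
  coe_eq : (M : Set α) = meetcl C
  isAntichain : IsAntichain (· ≤ ·) (C : Set α)
  sdiff_eq : (M : Set α) \ C = A ∪ B
  disjoint : Disjoint A B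
  isChain_A : IsChain (· ≤ ·) A
  isChain_B : IsChain (· ≤ ·) B
  xp_mem : xp ∈ C
  xq_mem : xq ∈ A
  xr_mem : xr ∈ B
  coversIn_xq : coversIn M xq xp
  coversIn_xr : coversIn M xr xp
  eq_xp : ∀ c ∈ C, (∃ a ∈ A, coversIn M a c) → (∃ b ∈ B, coversIn M b c) → c = xp
  isGreatest_A : IsGreatest A xa
  isGreatest_B : IsGreatest B xb

noncomputable def attachCount (C M : Finset α) (v : α) : ℕ := #(C.filter (coversIn M v ·))

/-- The value of `μ_S(v, x_i)` on `M` claimed by the theorem; `attachCount` is the paper's `η`. -/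
noncomputable def doubleChainWeight (C M : Finset α) (xa xb v : α) : ℤ :=
  if v ∈ C then -1 else attachCount C M v - ((if v = xa then 1 else 0) + if v = xb then 1 else 0)

namespace IsDoubleChain

variable {C M : Finset α} {A B : Set α} {xp xq xr xa xb : α}

theorem symm (h : IsDoubleChain C M A B xp xq xr xa xb) :
    IsDoubleChain C M B A xp xr xq xb xa where
  coe_eq := h.coe_eq
  isAntichain := h.isAntichain
  sdiff_eq := h.sdiff_eq.trans (Set.union_comm A B)
  disjoint := h.disjoint.symm
  isChain_A := h.isChain_B
  isChain_B := h.isChain_A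
  xp_mem := h.xp_mem
  xq_mem := h.xr_mem
  xr_mem := h.xq_mem
  coversIn_xq := h.coversIn_xr
  coversIn_xr := h.coversIn_xq
  eq_xp c hc hB hA := h.eq_xp c hc hA hB
  isGreatest_A := h.isGreatest_B
  isGreatest_B := h.isGreatest_A

theorem subset (h : IsDoubleChain C M A B xp xq xr xa xb) : C ⊆ M := fun _ hc =>
  mem_coe.1 (h.coe_eq ▸ subset_meetcl _ (mem_coe.2 hc))

theorem infClosed (h : IsDoubleChain C M A B xp xq xr xa xb) : InfClosed (M : Set α) :=
  h.coe_eq ▸ infClosed_meetcl _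

theorem not_lt (h : IsDoubleChain C M A B xp xq xr xa xb) : ∀ c ∈ C, ∀ m ∈ M, ¬c < m :=
  fun _ hc _ hm => not_lt_of_mem_meetcl h.isAntichain hc (h.coe_eq ▸ mem_coe.2 hm)

theorem mem_union_iff (h : IsDoubleChain C M A B xp xq xr xa xb) {y : α} :
    y ∈ A ∪ B ↔ y ∈ M ∧ y ∉ C := by
  rw [← h.sdiff_eq]
  rfl

theorem not_le_of_mem_union (h : IsDoubleChain C M A B xp xq xr xa xb) {c y : α} (hc : c ∈ C)
    (hy : y ∈ A ∪ B) : ¬c ≤ y := by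
  obtain ⟨hyM, hyC⟩ := h.mem_union_iff.1 hy
  exact fun hcy => h.not_lt c hc y hyM (hcy.lt_of_ne (by rintro rfl; exact hyC hc))

theorem xq_ne_xr (h : IsDoubleChain C M A B xp xq xr xa xb) : xq ≠ xr :=
  h.disjoint.ne_of_mem h.xq_mem h.xr_mem

theorem xb_inf_xp (h : IsDoubleChain C M A B xp xq xr xa xb) : xb ⊓ xp = xr :=
  have hb : xb ∈ A ∪ B := Or.inr h.isGreatest_B.1
  inf_eq_of_coversIn h.infClosed h.coversIn_xr (h.mem_union_iff.1 hb).1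
    (h.isGreatest_B.2 h.xr_mem) (h.not_le_of_mem_union h.xp_mem hb)

theorem le_xq_and_le_xr_of_mem_A (h : IsDoubleChain C M A B xp xq xr xa xb) {v : α} (hv : v ∈ A)
    (hvb : v ≤ xb) : v ≤ xq ∧ v ≤ xr := by
  have hvq : v ≤ xq := by
    by_contra hvq
    have hqv : xq ≤ v := (h.isChain_A.total h.xq_mem hv).resolve_right hvq
    have hinf : v ⊓ xp = xq := inf_eq_of_coversIn h.infClosed h.coversIn_xq
      (h.mem_union_iff.1 (Or.inl hv)).1 hqv (h.not_le_of_mem_union h.xp_mem (Or.inl hv))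
    have hqr : xq ≤ xr := hinf ▸ h.xb_inf_xp ▸ inf_le_inf_right xp hvb
    exact h.coversIn_xq.2.2.2 xr h.coversIn_xr.1 ⟨hqr.lt_of_ne h.xq_ne_xr, h.coversIn_xr.2.2.1⟩
  exact ⟨hvq, h.xb_inf_xp ▸ le_inf hvb (hvq.trans h.coversIn_xq.2.2.1.le)⟩

theorem le_xq_and_le_xr_iff (h : IsDoubleChain C M A B xp xq xr xa xb) {v : α}
    (hv : v ∈ A ∪ B) : v ≤ xq ∧ v ≤ xr ↔ v ≤ xa ∧ v ≤ xb := by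
  refine ⟨fun hvqr => ⟨hvqr.1.trans (h.isGreatest_A.2 h.xq_mem),
    hvqr.2.trans (h.isGreatest_B.2 h.xr_mem)⟩, fun hvab => ?_⟩
  rcases hv with hv | hv
  · exact h.le_xq_and_le_xr_of_mem_A hv hvab.2
  · exact (h.symm.le_xq_and_le_xr_of_mem_A hv hvab.1).symm

theorem coversIn_xp_iff (h : IsDoubleChain C M A B xp xq xr xa xb) {w : α} (hw : w ∈ A ∪ B) :
    coversIn M w xp ↔ w = xq ∨ w = xr := by
  refine ⟨fun hcov => ?_, by rintro (rfl | rfl); exacts [h.coversIn_xq, h.coversIn_xr]⟩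
  rcases hw with hw | hw
  · exact Or.inl (h.isChain_A.eq_of_coversIn hw h.xq_mem hcov h.coversIn_xq)
  · exact Or.inr (h.isChain_B.eq_of_coversIn hw h.xr_mem hcov h.coversIn_xr)

theorem eq_of_coversIn_of_ne_xp (h : IsDoubleChain C M A B xp xq xr xa xb) {c u w : α}
    (hc : c ∈ C) (hcp : c ≠ xp) (hu : u ∈ A ∪ B) (hw : w ∈ A ∪ B) (huc : coversIn M u c)
    (hwc : coversIn M w c) : u = w := by
  rcases hu with hu | hu <;> rcases hw with hw | hw
  · exact h.isChain_A.eq_of_coversIn hu hw huc hwc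
  · exact absurd (h.eq_xp c hc ⟨u, hu, huc⟩ ⟨w, hw, hwc⟩) hcp
  · exact absurd (h.eq_xp c hc ⟨w, hw, hwc⟩ ⟨u, hu, huc⟩) hcp
  · exact h.isChain_B.eq_of_coversIn hu hw huc hwc

theorem filter_coversIn_xp (h : IsDoubleChain C M A B xp xq xr xa xb) (v : α) :
    ((M \ C).filter (v ≤ ·)).filter (coversIn M · xp) = ({xq, xr} : Finset α).filter (v ≤ ·) := by
  ext u
  simp only [mem_filter, mem_insert, mem_singleton, mem_sdiff, ← h.mem_union_iff]
  constructor
  · rintro ⟨⟨hu, hvu⟩, huc⟩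
    exact ⟨(h.coversIn_xp_iff hu).1 huc, hvu⟩
  · rintro ⟨rfl | rfl, hvu⟩
    exacts [⟨⟨Or.inl h.xq_mem, hvu⟩, h.coversIn_xq⟩, ⟨⟨Or.inr h.xr_mem, hvu⟩, h.coversIn_xr⟩]

theorem card_coversIn_of_lt (h : IsDoubleChain C M A B xp xq xr xa xb) {v c : α} (hv : v ∈ M)
    (hc : c ∈ C) (hvc : v < c) :
    #(((M \ C).filter (v ≤ ·)).filter (coversIn M · c)) =
      1 + if c = xp ∧ v ≤ xq ∧ v ≤ xr then 1 else 0 := by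
  set W := ((M \ C).filter (v ≤ ·)).filter (coversIn M · c)
  have hmemW : ∀ w, w ∈ W ↔ w ∈ A ∪ B ∧ v ≤ w ∧ coversIn M w c := by
    intro w
    simp [W, h.mem_union_iff, and_assoc]
  obtain ⟨w, hwM, hvw, hwc⟩ := exists_coversIn_of_lt hv (h.subset hc) hvc
  have hwW : w ∈ W := (hmemW w).2 ⟨h.mem_union_iff.2
    ⟨hwM, fun hwC => h.not_lt w hwC c (h.subset hc) hwc.2.2.1⟩, hvw, hwc⟩
  by_cases hcp : c = xp
  · subst hcp
    rw [show W = _ from h.filter_coversIn_xp v] at hwW ⊢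
    have hqr : v ≤ xq ∨ v ≤ xr := by
      obtain ⟨rfl | rfl, hvw⟩ : (w = xq ∨ w = xr) ∧ v ≤ w := by simpa using hwW
      exacts [Or.inl hvw, Or.inr hvw]
    rw [filter_insert, filter_singleton]
    by_cases hq : v ≤ xq <;> by_cases hr : v ≤ xr <;> simp [hq, hr, h.xq_ne_xr] at hqr ⊢
  · have hW : #W = 1 := by
      refine le_antisymm (card_le_one.2 fun u hu u' hu' => ?_) (card_pos.2 ⟨w, hwW⟩)
      obtain ⟨hu, -, huc⟩ := (hmemW u).1 hu
      obtain ⟨hu', -, hu'c⟩ := (hmemW u').1 hu'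
      exact h.eq_of_coversIn_of_ne_xp hc hcp hu hu' huc hu'c
    simp [hW, hcp]

theorem sum_attachCount (h : IsDoubleChain C M A B xp xq xr xa xb) {v : α} (hv : v ∈ M) :
    ∑ w ∈ (M \ C).filter (v ≤ ·), attachCount C M w =
      #(C.filter (v < ·)) + if v ≤ xq ∧ v ≤ xr then 1 else 0 := by
  set U := (M \ C).filter (v ≤ ·)
  have hcount : ∑ w ∈ U, attachCount C M w = ∑ c ∈ C, #(U.filter (coversIn M · c)) :=
    sum_card_bipartiteAbove_eq_sum_card_bipartiteBelow (coversIn (M : Set α)) (s := U) (t := C)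
  have hlt : ∀ c ∈ C, #(U.filter (coversIn M · c)) ≠ 0 → v < c := by
    intro c _ hne
    obtain ⟨w, hw⟩ := card_ne_zero.1 hne
    obtain ⟨hwU, hwc⟩ := mem_filter.1 hw
    exact (mem_filter.1 hwU).2.trans_lt hwc.2.2.1
  rw [hcount, ← sum_filter_of_ne hlt, sum_congr rfl fun c hc =>
    h.card_coversIn_of_lt hv (mem_filter.1 hc).1 (mem_filter.1 hc).2, sum_add_distrib,
    card_eq_sum_ones]
  by_cases hP : v ≤ xq ∧ v ≤ xr
  · have hxp : xp ∈ C.filter (v < ·) :=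
      mem_filter.2 ⟨h.xp_mem, hP.1.trans_lt h.coversIn_xq.2.2.1⟩
    simp [hP, hxp]
  · simp [hP]

theorem filter_le_eq_singleton (h : IsDoubleChain C M A B xp xq xr xa xb) {v : α} (hv : v ∈ C) :
    M.filter (v ≤ ·) = {v} := by
  ext z
  simp only [mem_filter, mem_singleton]
  refine ⟨fun ⟨hz, hvz⟩ => ?_, by rintro rfl; exact ⟨h.subset hv, le_rfl⟩⟩
  exact (hvz.eq_or_lt.resolve_right (h.not_lt v hv z hz)).symm

theorem filter_le_eq_union (h : IsDoubleChain C M A B xp xq xr xa xb) {v : α} (hv : v ∉ C) :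
    M.filter (v ≤ ·) = C.filter (v < ·) ∪ (M \ C).filter (v ≤ ·) := by
  ext z
  simp only [mem_filter, mem_union, mem_sdiff]
  constructor
  · rintro ⟨hz, hvz⟩
    by_cases hzC : z ∈ C
    · exact Or.inl ⟨hzC, hvz.lt_of_ne (by rintro rfl; exact hv hzC)⟩
    · exact Or.inr ⟨⟨hz, hzC⟩, hvz⟩
  · rintro (⟨hzC, hvz⟩ | ⟨⟨hz, -⟩, hvz⟩)
    exacts [⟨h.subset hzC, hvz.le⟩, ⟨hz, hvz⟩]

theorem sum_sdiff_doubleChainWeight (h : IsDoubleChain C M A B xp xq xr xa xb) (v : α) :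
    ∑ w ∈ (M \ C).filter (v ≤ ·), doubleChainWeight C M xa xb w =
      ∑ w ∈ (M \ C).filter (v ≤ ·), (attachCount C M w : ℤ) -
        ((if v ≤ xa then 1 else 0) + if v ≤ xb then 1 else 0) := by
  have hmem : ∀ t ∈ A ∪ B, t ∈ (M \ C).filter (v ≤ ·) ↔ v ≤ t := fun t ht => by
    simp [h.mem_union_iff.1 ht]
  rw [sum_congr rfl fun w hw => show doubleChainWeight C M xa xb w = attachCount C M w -
    ((if w = xa then 1 else 0) + if w = xb then 1 else 0) from
    if_neg (mem_sdiff.1 (mem_filter.1 hw).1).2, sum_sub_distrib, sum_add_distrib, sum_ite_eq',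
    sum_ite_eq']
  simp only [hmem xa (Or.inl h.isGreatest_A.1), hmem xb (Or.inr h.isGreatest_B.1)]

theorem doubleChainWeight_of_mem_union (h : IsDoubleChain C M A B xp xq xr xa xb) {v : α}
    (hv : v ∈ A ∪ B) :
    doubleChainWeight C M xa xb v = attachCount C M v - if v = xa ∨ v = xb then 1 else 0 := by
  have hab : xa ≠ xb := h.disjoint.ne_of_mem h.isGreatest_A.1 h.isGreatest_B.1
  rw [doubleChainWeight, if_neg (h.mem_union_iff.1 hv).2]
  rcases eq_or_ne v xa with rfl | ha
  · simp [hab]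
  · by_cases hb : v = xb <;> simp [ha, hb, hab.symm]

theorem sum_doubleChainWeight (h : IsDoubleChain C M A B xp xq xr xa xb) {v : α} (hv : v ∈ M) :
    ∑ z ∈ M.filter (v ≤ ·), doubleChainWeight C M xa xb z = -1 := by
  by_cases hvC : v ∈ C
  · simp [h.filter_le_eq_singleton hvC, doubleChainWeight, hvC]
  have hvAB : v ∈ A ∪ B := h.mem_union_iff.2 ⟨hv, hvC⟩
  have hC : ∑ c ∈ C.filter (v < ·), doubleChainWeight C M xa xb c = -#(C.filter (v < ·)) := by
    rw [sum_congr rfl fun c hc =>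
      show doubleChainWeight C M xa xb c = -1 from if_pos (mem_filter.1 hc).1]
    simp
  have hvab : v ≤ xa ∨ v ≤ xb := hvAB.imp (h.isGreatest_A.2 ·) (h.isGreatest_B.2 ·)
  rw [h.filter_le_eq_union hvC, sum_union (disjoint_filter_filter disjoint_sdiff), hC,
    h.sum_sdiff_doubleChainWeight, ← Nat.cast_sum, h.sum_attachCount hv]
  simp only [h.le_xq_and_le_xr_iff hvAB]
  by_cases ha : v ≤ xa <;> by_cases hb : v ≤ xb <;> simp [ha, hb] at hvab ⊢ <;> ring

end IsDoubleChain

end DoubleChain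

theorem attachCount_eq_ncard {α : Type*} [SemilatticeInf α] (C M : Finset α) (v : α) :
    attachCount C M v = {z ∈ (C : Set α) | coversIn M v z}.ncard := by
  rw [attachCount, ← Set.ncard_coe_finset, coe_filter]
  rfl

theorem moebius_eq_of_meetcl_CSet {α : Type*} [SemilatticeInf α] {S C M : Finset α} {x : α}
    {mu g : α → ℤ} (hS : InfClosed (S : Set α)) (hx : x ∈ S) (hC : (C : Set α) = CSet S x)
    (hM : (M : Set α) = meetcl C) (hg : ∀ v ∈ M, ∑ z ∈ M.filter (v ≤ ·), g z = -1)
    (hmu1 : mu x = 1)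
    (hmu : ∀ y ∈ S, y < x → mu y = -∑ z ∈ S.filter (fun z => y < z ∧ z ≤ x), mu z) :
    (∀ v ∈ M, mu v = g v) ∧ ∀ v ∈ S, v < x → v ∉ M → mu v = 0 := by
  rw [hC] at hM
  have hMS : M ⊆ S := by
    rw [← coe_subset, hM]
    exact meetcl_min hS (CSet_subset _ _)
  have hMx : ∀ m ∈ M, m < x := fun m hm => lt_of_mem_meetcl_CSet (hM ▸ mem_coe.2 hm)
  have hcover : ∀ v ∈ S, v < x → ∃ m ∈ M, v ≤ m := by
    intro v hv hvx
    obtain ⟨c, -, hvc, hc⟩ := exists_coversIn_of_lt hv hx hvx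
    exact ⟨c, mem_coe.1 (hM ▸ subset_meetcl _ hc), hvc⟩
  have h := moebius_eq_of_infClosed_cover hx hMS hMx (hM ▸ infClosed_meetcl _) hcover hg hmu1 hmu
  exact ⟨fun v hv => (h v (hMS hv) (hMx v hv)).trans (if_pos hv),
    fun v hv hvx hvM => (h v hv hvx).trans (if_neg hvM)⟩

theorem stmt5_general {α : Type*} [SemilatticeInf α]
    (S : Finset α) (hmeet : ∀ x ∈ S, ∀ y ∈ S, x ⊓ y ∈ S)
    (xi : α) (hxi : xi ∈ S)
    (A B : Set α) (hdisj : Disjoint A B)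
    (hchA : IsChain (· ≤ ·) A) (hchB : IsChain (· ≤ ·) B)
    (hAB : meetcl (CSet (↑S : Set α) xi) \ CSet (↑S : Set α) xi = A ∪ B)
    -- exactly one element `x_p` of `C_S(x_i)` attaches to both chains
    (xp : α) (hxp : xp ∈ CSet (↑S : Set α) xi)
    (hxpA : ∃ xq ∈ A, coversIn (meetcl (CSet (↑S : Set α) xi)) xq xp)
    (hxpB : ∃ xr ∈ B, coversIn (meetcl (CSet (↑S : Set α) xi)) xr xp)
    (huniq : ∀ z ∈ CSet (↑S : Set α) xi,
      (∃ a ∈ A, coversIn (meetcl (CSet (↑S : Set α) xi)) a z) →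
      (∃ b ∈ B, coversIn (meetcl (CSet (↑S : Set α) xi)) b z) → z = xp)
    -- top elements of the chains
    (xa xb : α)
    (hxa : xa ∈ A ∧ ∀ a ∈ A, a ≤ xa)
    (hxb : xb ∈ B ∧ ∀ b ∈ B, b ≤ xb)
    -- the Möbius function of the poset `S`
    (mu : α → α → ℤ)
    (hmu1 : ∀ a, mu a a = 1)
    (hmu2 : ∀ y ∈ S, ∀ x ∈ S, y < x →
      mu y x = -∑ z ∈ S.filter (fun z => y < z ∧ z ≤ x), mu z x)
    (hmu0 : ∀ y x : α, ¬y ≤ x → mu y x = 0)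
    -- the number of elements of `C_S(x_i)` attached to `k`
    (η : α → ℤ)
    (hη : ∀ k, η k =
      ({z ∈ CSet (↑S : Set α) xi |
        coversIn (meetcl (CSet (↑S : Set α) xi)) k z}.ncard : ℤ)) :
    mu xi xi = 1 ∧
    (∀ xj ∈ CSet (↑S : Set α) xi, mu xj xi = -1) ∧
    (∀ xj, (xj = xa ∨ xj = xb) → mu xj xi = η xj - 1) ∧
    (∀ xj ∈ A ∪ B, xj ≠ xa → xj ≠ xb → mu xj xi = η xj) ∧
    (∀ xj ∈ S, xj ≠ xi → xj ∉ meetcl (CSet (↑S : Set α) xi) → mu xj xi = 0) := by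
  obtain ⟨C, hC⟩ := (S.finite_toSet.subset (CSet_subset (S : Set α) xi)).exists_finset_coe
  obtain ⟨M, hM⟩ := (S.finite_toSet.subset (meetcl_min hmeet (CSet_subset _ xi))).exists_finset_coe
  simp only [← hC] at hM hAB hxp hxpA hxpB huniq hη ⊢
  simp only [← hM] at hAB hxpA hxpB huniq hη ⊢
  obtain ⟨xq, hxqA, hxq⟩ := hxpA
  obtain ⟨xr, hxrB, hxr⟩ := hxpB
  have hD : IsDoubleChain C M A B xp xq xr xa xb := ⟨hM, hC ▸ isAntichain_CSet _ _, hAB,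
    hdisj, hchA, hchB, hxp, hxqA, hxrB, hxq, hxr, huniq, ⟨hxa.1, fun a ha => hxa.2 a ha⟩,
    ⟨hxb.1, fun b hb => hxb.2 b hb⟩⟩
  obtain ⟨hmuM, hmu_out⟩ := moebius_eq_of_meetcl_CSet (mu := (mu · xi)) hmeet hxi hC hM
    (fun v hv => hD.sum_doubleChainWeight hv) (hmu1 xi) (fun y hy hyx => hmu2 y hy xi hxi hyx)
  refine ⟨hmu1 xi, fun xj hj => ?_, fun xj hj => ?_, fun xj hj hja hjb => ?_,
    fun xj hj hne hjM => ?_⟩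
  · rw [hmuM xj (hD.subset hj)]
    exact if_pos hj
  · have hjAB : xj ∈ A ∪ B := hj.elim (fun h => h ▸ Or.inl hxa.1) (fun h => h ▸ Or.inr hxb.1)
    rw [hmuM xj (hD.mem_union_iff.1 hjAB).1, hD.doubleChainWeight_of_mem_union hjAB, if_pos hj,
      hη, attachCount_eq_ncard]
  · rw [hmuM xj (hD.mem_union_iff.1 hj).1, hD.doubleChainWeight_of_mem_union hj,
      if_neg (not_or.2 ⟨hja, hjb⟩), hη, attachCount_eq_ncard, sub_zero]
  · by_cases hle : xj ≤ xi
    · exact hmu_out xj hj (hle.lt_of_ne hne) hjM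
    · exact hmu0 xj xi hle

theorem stmt5 {α : Type*} [SemilatticeInf α] [LocallyFiniteOrder α]
    (S : Finset α) (hmeet : ∀ x ∈ S, ∀ y ∈ S, x ⊓ y ∈ S)
    (xi : α) (hxi : xi ∈ S)
    (A B : Set α) (hdisj : Disjoint A B)
    (hchA : IsChain (· ≤ ·) A) (hchB : IsChain (· ≤ ·) B)
    (hAB : meetcl (CSet (↑S : Set α) xi) \ CSet (↑S : Set α) xi = A ∪ B)
    -- exactly one element `x_p` of `C_S(x_i)` attaches to both chains
    (xp : α) (hxp : xp ∈ CSet (↑S : Set α) xi)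
    (hxpA : ∃ xq ∈ A, coversIn (meetcl (CSet (↑S : Set α) xi)) xq xp)
    (hxpB : ∃ xr ∈ B, coversIn (meetcl (CSet (↑S : Set α) xi)) xr xp)
    (huniq : ∀ z ∈ CSet (↑S : Set α) xi,
      (∃ a ∈ A, coversIn (meetcl (CSet (↑S : Set α) xi)) a z) →
      (∃ b ∈ B, coversIn (meetcl (CSet (↑S : Set α) xi)) b z) → z = xp)
    -- top elements of the chains
    (xa xb : α)
    (hxa : xa ∈ A ∧ ∀ a ∈ A, a ≤ xa)
    (hxb : xb ∈ B ∧ ∀ b ∈ B, b ≤ xb)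
    -- the Möbius function of the poset `S`
    (mu : α → α → ℤ)
    (hmu1 : ∀ a, mu a a = 1)
    (hmu2 : ∀ y ∈ S, ∀ x ∈ S, y < x →
      mu y x = -∑ z ∈ S.filter (fun z => y < z ∧ z ≤ x), mu z x)
    (hmu0 : ∀ y x : α, ¬y ≤ x → mu y x = 0)
    -- the number of elements of `C_S(x_i)` attached to `k`
    (η : α → ℤ)
    (hη : ∀ k, η k =
      ({z ∈ CSet (↑S : Set α) xi |
        coversIn (meetcl (CSet (↑S : Set α) xi)) k z}.ncard : ℤ)) :
    mu xi xi = 1 ∧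
    (∀ xj ∈ CSet (↑S : Set α) xi, mu xj xi = -1) ∧
    (∀ xj, (xj = xa ∨ xj = xb) → mu xj xi = η xj - 1) ∧
    (∀ xj ∈ A ∪ B, xj ≠ xa → xj ≠ xb → mu xj xi = η xj) ∧
    (∀ xj ∈ S, xj ≠ xi → xj ∉ meetcl (CSet (↑S : Set α) xi) → mu xj xi = 0) :=
  stmt5_general S hmeet xi hxi A B hdisj hchA hchB hAB xp hxp hxpA hxpB huniq xa xb hxa hxb mu hmu1
    hmu2 hmu0 η hη
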